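/- arXiv:2312.06564 — 4 statements merged into one kernel-verified Lean document; each statement's English description precedes it below -/
import Mathlib

section
/- Suppose d is symmetric and satisfies the triangle inequality. Let x₁, x₂ ∈ D with Cl(x₁) = Cl(x₂) and d(x₁, x₂) < ε/2. If c is a strong counterfactual for x₁ (i.e., Cl(c) ≠ Cl(x₁) and d(x₁, c) = cfd(x₁)), then c is an ε-approximate counterfactual for x₂, i.e., Cl(c) ≠ Cl(x₂) and d(x₂, c) ≤ cfd(x₂) + ε. (Weak ε/2-robustness of the exhaustive ε-approximate explainer.) -/
theorem weak_robustness {D L : Type*} (Cl : D → L) (d : D → D → ℝ)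
    (hd : ∀ x y, 0 ≤ d x y)
    (hsymm : ∀ x y, d x y = d y x)
    (htri : ∀ a b c, d a c ≤ d a b + d b c)
    (cfd : D → ℝ)
    (hcfd : ∀ x, cfd x = sInf {t : ℝ | ∃ x', Cl x' ≠ Cl x ∧ t = d x x'})
    (hne : ∀ x : D, ∃ x', Cl x' ≠ Cl x)
    (ε : ℝ) (hε : 0 < ε)
    (x₁ x₂ : D) (hclass : Cl x₁ = Cl x₂) (hclose : d x₁ x₂ < ε / 2)
    (c : D) (hc : Cl c ≠ Cl x₁) (hstrong : d x₁ c = cfd x₁) :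
    Cl c ≠ Cl x₂ ∧ d x₂ c ≤ cfd x₂ + ε := by
  have hc2 : Cl c ≠ Cl x₂ := hclass ▸ hc
  refine ⟨hc2, ?_⟩
  -- cfd x₁ ≤ d x₁ x₂ + cfd x₂
  have hbdd : ∀ y : D, BddBelow {t : ℝ | ∃ x', Cl x' ≠ Cl y ∧ t = d y x'} := by
    intro y
    exact ⟨0, fun t ⟨x', _, ht⟩ => ht ▸ hd y x'⟩
  have key : cfd x₁ ≤ d x₁ x₂ + cfd x₂ := by
    rw [hcfd x₁, hcfd x₂]
    rw [show d x₁ x₂ + sInf {t : ℝ | ∃ x', Cl x' ≠ Cl x₂ ∧ t = d x₂ x'} =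
        sInf {t : ℝ | ∃ x', Cl x' ≠ Cl x₂ ∧ t = d x₂ x'} + d x₁ x₂ from add_comm _ _]
    rw [← sub_le_iff_le_add]
    apply le_csInf
    · obtain ⟨x', hx'⟩ := hne x₂
      exact ⟨d x₂ x', x', hx', rfl⟩
    · rintro t ⟨x', hx', rfl⟩
      rw [sub_le_iff_le_add]
      have h1 : Cl x' ≠ Cl x₁ := hclass ▸ hx'
      calc sInf {t : ℝ | ∃ x', Cl x' ≠ Cl x₁ ∧ t = d x₁ x'}
          ≤ d x₁ x' := csInf_le (hbdd x₁) ⟨x', h1, rfl⟩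
        _ ≤ d x₁ x₂ + d x₂ x' := htri _ _ _
        _ = d x₂ x' + d x₁ x₂ := add_comm _ _
  have h2 : d x₂ c ≤ d x₂ x₁ + d x₁ c := htri _ _ _
  rw [hsymm x₂ x₁] at h2
  have := hclose
  linarith [h2, hstrong, key]
end

section
/- Suppose d is symmetric and satisfies the triangle inequality. Let c be an ε-approximate counterfactual for x that is δ-safe, i.e., δ = cfd(x) + ε − d(x, c) and δ ≥ 0. Then for all x' ∈ D with Cl(x') = Cl(x) and d(x, x') < δ/2, c is an ε-approximate counterfactual for x', i.e., d(x', c) ≤ cfd(x') + ε. -/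
theorem safe_cf_robustness {D L : Type*} (Cl : D → L) (d : D → D → ℝ)
    (hd : ∀ x y, 0 ≤ d x y)
    (hsymm : ∀ x y, d x y = d y x)
    (htri : ∀ a b c, d a c ≤ d a b + d b c)
    (cfd : D → ℝ)
    (hcfd : ∀ x, cfd x = sInf {t : ℝ | ∃ x', Cl x' ≠ Cl x ∧ t = d x x'})
    (hne : ∀ x : D, ∃ x', Cl x' ≠ Cl x)
    (ε δ : ℝ) (x c : D) (hc : Cl c ≠ Cl x)
    (happrox : d x c ≤ cfd x + ε)
    (hδ : δ = cfd x + ε - d x c) (hδ0 : 0 ≤ δ)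
    (x' : D) (hclass : Cl x' = Cl x) (hclose : d x x' < δ / 2) :
    d x' c ≤ cfd x' + ε := by
  -- cfd x ≤ d x x' + cfd x'
  have hbdd : BddBelow {t : ℝ | ∃ y, Cl y ≠ Cl x ∧ t = d x y} := by
    refine ⟨0, ?_⟩
    rintro t ⟨y, _, rfl⟩
    exact hd x y
  have hlip : cfd x - d x x' ≤ cfd x' := by
    rw [hcfd x']
    apply le_csInf
    · obtain ⟨y, hy⟩ := hne x'
      exact ⟨d x' y, y, hy, rfl⟩
    · rintro t ⟨y, hy, rfl⟩
      have hmem : d x y ∈ {t : ℝ | ∃ y, Cl y ≠ Cl x ∧ t = d x y} := by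
        exact ⟨y, by rw [hclass] at hy; exact hy, rfl⟩
      have h1 : cfd x ≤ d x y := by
        rw [hcfd x]; exact csInf_le hbdd hmem
      have h2 : d x y ≤ d x x' + d x' y := htri x x' y
      linarith
  have h3 : d x' c ≤ d x' x + d x c := htri x' x c
  have h4 : d x' x = d x x' := hsymm x' x
  linarith
end

section
/- If d is symmetric, satisfies the triangle inequality, and x₁, x₂ have the same class, then the set of ε₁-approximate counterfactuals of x₁ is contained in the set of (ε₁ + 2·d(x₁,x₂))-approximate counterfactuals of x₂. -/
theorem approx_cf_subset {D L : Type*} (Cl : D → L) (d : D → D → ℝ)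
    (hd : ∀ x y, 0 ≤ d x y)
    (hsymm : ∀ x y, d x y = d y x)
    (htri : ∀ a b c, d a c ≤ d a b + d b c)
    (cfd : D → ℝ)
    (hcfd : ∀ x, cfd x = sInf {t : ℝ | ∃ x', Cl x' ≠ Cl x ∧ t = d x x'})
    (hne : ∀ x : D, ∃ x', Cl x' ≠ Cl x)
    (ε₁ : ℝ) (x₁ x₂ : D) (hclass : Cl x₁ = Cl x₂)
    (c : D) (hc : Cl c ≠ Cl x₁) (happrox : d x₁ c ≤ cfd x₁ + ε₁) :
    Cl c ≠ Cl x₂ ∧ d x₂ c ≤ cfd x₂ + (ε₁ + 2 * d x₁ x₂) := by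
  have hc₂ : Cl c ≠ Cl x₂ := hclass ▸ hc
  refine ⟨hc₂, ?_⟩
  -- cfd x₁ ≤ cfd x₂ + d x₁ x₂
  have key : cfd x₁ ≤ cfd x₂ + d x₁ x₂ := by
    rw [hcfd x₂]
    have hne₂ : {t : ℝ | ∃ x', Cl x' ≠ Cl x₂ ∧ t = d x₂ x'}.Nonempty := by
      obtain ⟨x', hx'⟩ := hne x₂
      exact ⟨d x₂ x', x', hx', rfl⟩
    have hlb : ∀ t ∈ {t : ℝ | ∃ x', Cl x' ≠ Cl x₂ ∧ t = d x₂ x'},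
        cfd x₁ - d x₁ x₂ ≤ t := by
      rintro t ⟨x', hx', rfl⟩
      have h1 : cfd x₁ ≤ d x₁ x' := by
        rw [hcfd x₁]
        apply csInf_le
        · exact ⟨0, fun s ⟨y, _, hs⟩ => hs ▸ hd x₁ y⟩
        · exact ⟨x', hclass ▸ hx', rfl⟩
      have h2 := htri x₁ x₂ x'
      linarith
    have := le_csInf hne₂ hlb
    linarith
  have h3 := htri x₂ x₁ c
  have h4 := hsymm x₁ x₂
  linarith
end

section
/- In ℝ with the Euclidean metric, let the class Y be the interval [−r, r] with r > 0 and class B its complement. For x ∈ (0, r), the strong counterfactuals of x (with respect to the closure, i.e., achieving cfd) do not exist inside B open, but cfd(x) = r − x; and for x₁ = t, x₂ = −t with 0 < t < r, the minimizing boundary points are r and −r respectively, at distance 2r, while d(x₁,x₂) = 2t. Hence for any k > 0, choosing t < r/k yields 2r > k·2t, so the nearest-boundary-point explainer violates the (ε,k)-robustness inequality. -/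
/-!
For `0 ≤ x ≤ r` the distance `|x - c|` to points `|c| > r` is bounded below by `r - x`, and
`c = r + δ` comes within `δ` of it, so `cfd(x) = r - x` although no counterfactual attains it.
The nearest-boundary-point explainer sends `±t` to `±r`: inputs `2t` apart get explanations `2r`
apart, which beats any Lipschitz constant `k` once `t < r / k`.
-/

open Filter Topology

lemma sub_abs_le_abs_sub_of_lt_abs {r x c : ℝ} (hc : r < |c|) : r - |x| ≤ |x - c| := by
  have := abs_sub_abs_le_abs_sub c x
  rw [abs_sub_comm] at this
  linarith

lemma sInf_abs_sub_of_lt_abs_eq_sub {r x : ℝ} (hx : 0 ≤ x) (hxr : x ≤ r) :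
    sInf {s : ℝ | ∃ c : ℝ, r < |c| ∧ s = |x - c|} = r - x := by
  have hc {δ : ℝ} (hδ : 0 < δ) : r < |r + δ| ∧ |x - (r + δ)| = r + δ - x := by
    constructor
    · rw [abs_of_pos (by linarith)]; linarith
    · rw [abs_sub_comm, abs_of_nonneg (by linarith)]
  refine csInf_eq_of_forall_ge_of_forall_gt_exists_lt ⟨_, r + 1, (hc one_pos).1, rfl⟩ ?_ ?_
  · rintro s ⟨c, hcr, rfl⟩
    simpa [abs_of_nonneg hx] using sub_abs_le_abs_sub_of_lt_abs (x := x) hcr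
  · intro w hw
    obtain ⟨hcr, hdist⟩ := hc (half_pos (sub_pos.2 hw))
    exact ⟨_, ⟨_, hcr, rfl⟩, by rw [hdist]; linarith⟩

-- `t` only has to be small, and every condition is open at `t = 0`.
lemma exists_pos_lt_and_two_mul_lt {r ε : ℝ} (k : ℝ) (hr : 0 < r) (hε : 0 < ε) :
    ∃ t : ℝ, 0 < t ∧ t < r ∧ 2 * t < ε ∧ k * (2 * t) < 2 * r := by
  have hsmall : ∀ᶠ t in 𝓝 (0 : ℝ), t < r ∧ 2 * t < ε ∧ k * (2 * t) < 2 * r := by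
    refine (eventually_lt_nhds hr).and ((?_ : ContinuousAt (fun t : ℝ => 2 * t) 0).eventually_lt
      continuousAt_const (by simpa using hε) |>.and ?_)
    · fun_prop
    · exact (by fun_prop : ContinuousAt (fun t : ℝ => k * (2 * t)) 0).eventually_lt
        continuousAt_const (by simpa using hr)
  have hsmall' := hsmall.filter_mono (nhdsWithin_le_nhds (s := Set.Ioi 0))
  exact (hsmall'.and self_mem_nhdsWithin).exists.imp
    fun t ⟨⟨htr, htε, htk⟩, ht⟩ => ⟨ht, htr, htε, htk⟩

theorem interval_nonrobust (r : ℝ) (hr : 0 < r) :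
    (∀ x : ℝ, 0 < x → x < r →
      sInf {s : ℝ | ∃ c : ℝ, r < |c| ∧ s = |x - c|} = r - x) ∧
    (∀ k : ℝ, 0 < k → ∀ ε : ℝ, 0 < ε → ∃ t : ℝ,
      0 < t ∧ t < r ∧ |t| ≤ r ∧ |(-t : ℝ)| ≤ r ∧
      |t - (-t)| < ε ∧ |r - (-r)| > k * |t - (-t)|) := by
  refine ⟨fun x hx hxr => sInf_abs_sub_of_lt_abs_eq_sub hx.le hxr.le, fun k _ ε hε => ?_⟩
  obtain ⟨t, ht, htr, htε, htk⟩ := exists_pos_lt_and_two_mul_lt k hr hε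
  have hsub (a : ℝ) (ha : 0 < a) : |a - -a| = 2 * a := by
    rw [sub_neg_eq_add, ← two_mul, abs_of_pos (mul_pos two_pos ha)]
  refine ⟨t, ht, htr, ?_, ?_, ?_, ?_⟩
  · rw [abs_of_pos ht]; exact htr.le
  · rw [abs_neg, abs_of_pos ht]; exact htr.le
  · rwa [hsub t ht]
  · rwa [hsub t ht, hsub r hr]
end
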